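/- Let M and N be binoids with M≠{∞}, N≠{∞} and both of finite combinatorial dimension. Then dim(M∧N) = dim M + dim N. -/

import Mathlib

/-- A binoid: a commutative monoid (written additively) with an absorbing element `infty`. -/
class Binoid (N : Type*) extends AddCommMonoid N where
  infty : N
  add_infty : ∀ x : N, x + infty = infty

namespace Binoid

variable {N : Type*} [Binoid N]

theorem infty_add (x : N) : (infty : N) + x = infty := by
  rw [add_comm]; exact add_infty x

/-- `I ⊆ N` is an ideal of the binoid `N`. -/
def IsIdeal (I : Set N) : Prop :=
  (infty : N) ∈ I ∧ ∀ a ∈ I, ∀ n : N, n + a ∈ I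

/-- The ideal generated by a subset `S` of a binoid. -/
def span (S : Set N) : Set N :=
  insert (infty : N) {x : N | ∃ n : N, ∃ s ∈ S, x = n + s}

/-- The `q`-th Frobenius sum `[q]I` of an ideal: the ideal generated by `{q • a | a ∈ I}`. -/
def frob (q : ℕ) (I : Set N) : Set N :=
  span {x : N | ∃ a ∈ I, x = q • a}

/-- The set of units of a binoid. -/
def unitSet (N : Type*) [Binoid N] : Set N := {a : N | ∃ b : N, a + b = 0}

/-- `N₊`, the set (ideal) of non-units of a binoid. -/
def plusSet (N : Type*) [Binoid N] : Set N := (unitSet N)ᶜ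

/-- A binoid is semipositive if its unit group is finite. -/
def Semipositive (N : Type*) [Binoid N] : Prop := (unitSet N).Finite

/-- A binoid is positive if `0` is its only unit. -/
def Positive (N : Type*) [Binoid N] : Prop := unitSet N = {0}

/-- A binoid is finitely generated if it is generated, as a (commutative) monoid,
by finitely many elements. -/
def FG (N : Type*) [Binoid N] : Prop :=
  ∃ s : Finset N, AddSubmonoid.closure (s : Set N) = ⊤

/-- A binoid is cancellative if `a + c = b + c` with `c ≠ ∞` implies `a = b`. -/
def Cancellative (N : Type*) [Binoid N] : Prop :=
  ∀ a b c : N, c ≠ infty → a + c = b + c → a = b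

/-- A binoid is reduced if `∞` is its only nilpotent element. -/
def Reduced (N : Type*) [Binoid N] : Prop :=
  ∀ (a : N) (n : ℕ), 0 < n → n • a = (infty : N) → a = infty

/-- A binoid is torsion-free if `n • a = n • b` for some `n ≥ 1` implies `a = b`. -/
def TorsionFree (N : Type*) [Binoid N] : Prop :=
  ∀ (a b : N) (n : ℕ), 0 < n → n • a = n • b → a = b

/-- A binoid is integral if `N ∖ {∞}` is a submonoid. -/
def Integral (N : Type*) [Binoid N] : Prop :=
  (0 : N) ≠ infty ∧ ∀ a b : N, a + b = (infty : N) → a = infty ∨ b = infty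

/-- The radical of an ideal of a binoid. -/
def rad (I : Set N) : Set N := {a : N | ∃ k : ℕ, 0 < k ∧ k • a ∈ I}

/-- An `N₊`-primary ideal: an ideal whose radical is `N₊`. -/
def IsPrimaryIdeal (I : Set N) : Prop := IsIdeal I ∧ rad I = plusSet N

/-- A prime ideal of a binoid: a proper ideal whose complement is closed under addition. -/
def IsPrime (I : Set N) : Prop :=
  IsIdeal I ∧ I ≠ Set.univ ∧ ∀ a b : N, a ∉ I → b ∉ I → a + b ∉ I

/-- A minimal prime ideal of a binoid. -/
def IsMinimalPrime (I : Set N) : Prop :=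
  IsPrime I ∧ ∀ J : Set N, IsPrime J → J ⊆ I → J = I

/-- The set of lengths of strictly increasing chains of prime ideals of `N`. -/
def dimSet (N : Type*) [Binoid N] : Set ℕ :=
  {n : ℕ | ∃ c : Fin (n + 1) → Set N, (∀ i, IsPrime (c i)) ∧ StrictMono c}

/-- The combinatorial dimension of a binoid: the supremum of the lengths of strictly
increasing chains of prime ideals. -/
noncomputable def dim (N : Type*) [Binoid N] : ℕ := sSup (dimSet N)

/-- `#(N/[q]𝔫)`: the number of elements of the binoid `N/[q]𝔫`, not counting `∞`;
equivalently, the number of elements of `N` outside of the ideal `[q]𝔫`. -/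
noncomputable def hkOn (I : Set N) (q : ℕ) : ℕ := Set.ncard ((frob q I)ᶜ)

/-- The Hilbert–Kunz multiplicity of an (`N₊`-primary) ideal `𝔫` on `N` is `L`:
the limit of `#(N/[q]𝔫)/q^(dim N)` as `q → ∞` is `L`. -/
def IsHKMultOn (I : Set N) (L : ℝ) : Prop :=
  Filter.Tendsto (fun q : ℕ => (hkOn I q : ℝ) / (q : ℝ) ^ dim N) Filter.atTop (nhds L)

/-- The Hilbert–Kunz multiplicity of the binoid `N` is `L`. -/
def IsHKMult (N : Type*) [Binoid N] (L : ℝ) : Prop :=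
  IsHKMultOn (plusSet N) L

/-- The sum `I + J` of two subsets of a binoid. -/
def idealSum (I J : Set N) : Set N := {x : N | ∃ a ∈ I, ∃ b ∈ J, x = a + b}


/-- The additive congruence on `N` contracting the subset `I` to a point.
(When `I` is an ideal, the relation below is already a congruence.) -/
def quotCon (I : Set N) : AddCon N :=
  addConGen (fun a b => a = b ∨ (a ∈ I ∧ b ∈ I))

/-- The residue class binoid `N/I`, obtained by contracting the ideal `I` to `∞`. -/
def BQuot (I : Set N) : Type _ := (quotCon I).Quotient

instance (I : Set N) : AddCommMonoid (BQuot I) :=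
  inferInstanceAs (AddCommMonoid (quotCon I).Quotient)

/-- The canonical projection `N → N/I`. -/
def BQuot.mk (I : Set N) (a : N) : BQuot I := (a : (quotCon I).Quotient)

instance (I : Set N) : Binoid (BQuot I) :=
  { (inferInstance : AddCommMonoid (BQuot I)) with
    infty := BQuot.mk I infty
    add_infty := fun x => AddCon.induction_on x fun a => by
      show BQuot.mk I a + BQuot.mk I infty = BQuot.mk I infty
      show ((a + infty : N) : (quotCon I).Quotient) = ((infty : N) : (quotCon I).Quotient)
      rw [add_infty] }

/-- The product of two binoids (with componentwise addition). -/
instance {M P : Type*} [Binoid M] [Binoid P] : Binoid (M × P) :=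
  { (inferInstance : AddCommMonoid (M × P)) with
    infty := ((infty : M), (infty : P))
    add_infty := fun x => by
      show (x.1 + infty, x.2 + infty) = ((infty : M), (infty : P))
      rw [add_infty, add_infty] }

/-- The ideal of `M × P` consisting of pairs one of whose coordinates is `∞`. -/
def smashIdeal (M P : Type*) [Binoid M] [Binoid P] : Set (M × P) :=
  {x : M × P | x.1 = infty ∨ x.2 = infty}

/-- The smash product `M ∧ P` of two binoids. -/
def Smash (M P : Type*) [Binoid M] [Binoid P] : Type _ :=
  BQuot (smashIdeal M P)

instance {M P : Type*} [Binoid M] [Binoid P] : AddCommMonoid (Smash M P) :=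
  inferInstanceAs (AddCommMonoid (BQuot (smashIdeal M P)))

instance {M P : Type*} [Binoid M] [Binoid P] : Binoid (Smash M P) :=
  inferInstanceAs (Binoid (BQuot (smashIdeal M P)))

/-- The class of `(m, p)` in the smash product `M ∧ P`. -/
def Smash.mk {M P : Type*} [Binoid M] [Binoid P] (m : M) (p : P) : Smash M P :=
  BQuot.mk (smashIdeal M P) (m, p)


end Binoid

open Binoid

/-!
Since `m ∧ n = (m ∧ 0) + (0 ∧ n)`, a prime `𝔓` of `M ∧ N` is determined by its pullbacks
`𝔭 = {m | m ∧ 0 ∈ 𝔓}` and `𝔮 = {n | 0 ∧ n ∈ 𝔓}`, and conversely every pair of primes gives the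
prime `𝔭 ∧ N ∪ M ∧ 𝔮`. Hence the spectrum of `M ∧ N` is order isomorphic to the product of the
spectra. In a product of posets, the steps of a strict chain each go up strictly in at least one
coordinate, so its length is at most the sum of the lengths of chains in the factors; conversely
a chain in the first factor followed by a chain in the second concatenate to one of the summed
length. Both spectra are nonempty because `M₊` and `N₊` are prime.
-/

namespace LTSeries

variable {α β : Type*} [Preorder α] [Preorder β]

theorem exists_length_eq_add_of_prod (p : LTSeries (α × β)) :
    ∃ (q : LTSeries α) (r : LTSeries β),
      q.last ≤ p.last.1 ∧ r.last ≤ p.last.2 ∧ p.length = q.length + r.length := by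
  induction p using RelSeries.inductionOn' with
  | singleton x =>
    exact ⟨RelSeries.singleton _ x.1, RelSeries.singleton _ x.2, le_rfl, le_rfl, rfl⟩
  | snoc p x hx ih =>
    obtain ⟨q, r, hq, hr, hlen⟩ := ih
    rcases Prod.lt_iff.mp hx with ⟨h₁, h₂⟩ | ⟨h₁, h₂⟩
    · refine ⟨q.snoc x.1 (hq.trans_lt h₁), r, by simp, by simpa using hr.trans h₂, ?_⟩
      rw [RelSeries.snoc_length, RelSeries.snoc_length, hlen]; omega
    · refine ⟨q, r.snoc x.2 (hr.trans_lt h₂), by simpa using hq.trans h₁, by simp, ?_⟩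
      rw [RelSeries.snoc_length, RelSeries.snoc_length, hlen]; omega

theorem exists_prod_length_eq_add (p : LTSeries α) (q : LTSeries β) :
    ∃ s : LTSeries (α × β), s.length = p.length + q.length :=
  ⟨(p.map (·, q.head) fun _ _ h => Prod.mk_lt_mk_iff_left.mpr h).smash
    (q.map (p.last, ·) fun _ _ h => Prod.mk_lt_mk_iff_right.mpr h) rfl, rfl⟩

theorem range_length_congr (e : α ≃o β) :
    Set.range (fun p : LTSeries α => p.length) = Set.range (fun p : LTSeries β => p.length) :=
  Set.ext fun _ => ⟨fun ⟨p, hp⟩ => ⟨p.map e e.strictMono, hp⟩,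
    fun ⟨p, hp⟩ => ⟨p.map e.symm e.symm.strictMono, hp⟩⟩

theorem sSup_range_length_prod [Nonempty α] [Nonempty β]
    (hα : BddAbove (Set.range fun p : LTSeries α => p.length))
    (hβ : BddAbove (Set.range fun p : LTSeries β => p.length)) :
    sSup (Set.range fun p : LTSeries (α × β) => p.length) =
      sSup (Set.range fun p : LTSeries α => p.length) +
        sSup (Set.range fun p : LTSeries β => p.length) := by
  refine IsGreatest.csSup_eq ⟨?_, ?_⟩
  · obtain ⟨p, hp⟩ := Nat.sSup_mem (Set.range_nonempty _) hα
    obtain ⟨q, hq⟩ := Nat.sSup_mem (Set.range_nonempty _) hβ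
    rw [← hp, ← hq]
    exact exists_prod_length_eq_add p q
  · rintro _ ⟨s, rfl⟩
    obtain ⟨q, r, -, -, hlen⟩ := exists_length_eq_add_of_prod s
    show s.length ≤ _
    rw [hlen]
    exact add_le_add (le_csSup hα ⟨q, rfl⟩) (le_csSup hβ ⟨r, rfl⟩)

end LTSeries

namespace Binoid

variable {M N P : Type*} [Binoid M] [Binoid N] [Binoid P]

theorem IsIdeal.add_mem_left {I : Set N} (hI : IsIdeal I) {a : N} (ha : a ∈ I) (n : N) :
    a + n ∈ I := by
  rw [add_comm]; exact hI.2 a ha n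

def IsIdeal.addCon {I : Set N} (hI : IsIdeal I) : AddCon N where
  r a b := a = b ∨ (a ∈ I ∧ b ∈ I)
  iseqv :=
    { refl _ := Or.inl rfl
      symm := by rintro _ _ (rfl | ⟨ha, hb⟩) <;> simp_all
      trans := by rintro _ _ _ (rfl | ⟨ha, hb⟩) (rfl | ⟨hb', hc⟩) <;> simp_all }
  add' := by
    rintro w x y z (rfl | ⟨hw, hx⟩) (rfl | ⟨hy, hz⟩)
    · exact Or.inl rfl
    · exact Or.inr ⟨hI.2 _ hy _, hI.2 _ hz _⟩
    all_goals exact Or.inr ⟨hI.add_mem_left hw _, hI.add_mem_left hx _⟩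

theorem quotCon_eq_addCon {I : Set N} (hI : IsIdeal I) : quotCon I = hI.addCon :=
  le_antisymm (AddCon.addConGen_le.2 fun _ _ h => h) fun a b h => AddConGen.Rel.of a b h

theorem BQuot.mk_eq_mk_iff {I : Set N} (hI : IsIdeal I) {a b : N} :
    BQuot.mk I a = BQuot.mk I b ↔ a = b ∨ (a ∈ I ∧ b ∈ I) := by
  show ((a : (quotCon I).Quotient) = b) ↔ _
  rw [AddCon.eq, quotCon_eq_addCon hI]
  rfl

theorem IsPrime.zero_notMem {𝔭 : Set N} (h : IsPrime 𝔭) : (0 : N) ∉ 𝔭 := fun h0 =>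
  h.2.1 <| Set.eq_univ_of_forall fun x => by simpa using h.1.2 0 h0 x

theorem IsPrime.add_mem_iff {𝔭 : Set N} (h : IsPrime 𝔭) {a b : N} :
    a + b ∈ 𝔭 ↔ a ∈ 𝔭 ∨ b ∈ 𝔭 := by
  refine ⟨fun hab => ?_, fun hab => hab.elim (h.1.add_mem_left · b) (h.1.2 b · a)⟩
  by_contra hc
  rw [not_or] at hc
  exact h.2.2 a b hc.1 hc.2 hab

theorem IsPrime.preimage {𝔭 : Set P} (h : IsPrime 𝔭) (f : N →+ P) (hf : f infty = infty) :
    IsPrime (f ⁻¹' 𝔭) := by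
  refine ⟨⟨?_, fun a ha n => ?_⟩, fun hu => ?_, fun a b ha hb hab => ?_⟩
  · simpa [hf] using h.1.1
  · simpa using h.1.2 _ ha (f n)
  · have h0 : (0 : N) ∈ f ⁻¹' 𝔭 := hu ▸ Set.mem_univ _
    exact h.zero_notMem (by simpa using h0)
  · exact h.2.2 _ _ ha hb (by simpa using hab)

theorem isPrime_plusSet (h0 : (0 : N) ≠ infty) : IsPrime (plusSet N) := by
  refine ⟨⟨fun ⟨b, hb⟩ => h0 (by rw [← hb, infty_add]), ?_⟩, ?_, ?_⟩
  · rintro a ha n ⟨c, hc⟩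
    exact ha ⟨n + c, by rw [← hc]; abel⟩
  · exact fun hu => (hu ▸ Set.mem_univ (0 : N) : (0 : N) ∈ plusSet N) ⟨0, add_zero 0⟩
  · intro a b ha hb hab
    obtain ⟨a', ha'⟩ := Set.notMem_compl_iff.mp ha
    obtain ⟨b', hb'⟩ := Set.notMem_compl_iff.mp hb
    exact hab ⟨a' + b', by rw [add_add_add_comm, ha', hb', add_zero]⟩

abbrev Spec (N : Type*) [Binoid N] : Type _ := {𝔭 : Set N // IsPrime 𝔭}

theorem dimSet_eq_range_length (N : Type*) [Binoid N] :
    dimSet N = Set.range fun p : LTSeries (Spec N) => p.length := by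
  ext n
  constructor
  · rintro ⟨c, hc, hmono⟩
    exact ⟨LTSeries.mk n (fun i => ⟨c i, hc i⟩) fun _ _ h => hmono h, rfl⟩
  · rintro ⟨p, rfl⟩
    exact ⟨fun i => (p i).1, fun i => (p i).2, fun _ _ h => p.strictMono h⟩

theorem isIdeal_smashIdeal : IsIdeal (smashIdeal M N) := by
  refine ⟨Or.inl rfl, fun a ha n => ?_⟩
  rcases ha with h | h
  · exact Or.inl (show n.1 + a.1 = infty by rw [h, add_infty])
  · exact Or.inr (show n.2 + a.2 = infty by rw [h, add_infty])

namespace Smash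

theorem mk_eq_mk_iff {m m' : M} {n n' : N} :
    mk m n = mk m' n' ↔
      (m, n) = (m', n') ∨ ((m, n) ∈ smashIdeal M N ∧ (m', n') ∈ smashIdeal M N) :=
  BQuot.mk_eq_mk_iff isIdeal_smashIdeal

theorem exists_mk (x : Smash M N) : ∃ m n, mk m n = x :=
  AddCon.induction_on x fun y => ⟨y.1, y.2, rfl⟩

theorem mk_add_mk (m m' : M) (n n' : N) : mk m n + mk m' n' = mk (m + m') (n + n') := rfl

def inl : M →+ Smash M N where
  toFun m := mk m 0
  map_zero' := rfl
  map_add' m m' := by rw [mk_add_mk, add_zero]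

def inr : N →+ Smash M N where
  toFun n := mk 0 n
  map_zero' := rfl
  map_add' n n' := by rw [mk_add_mk, add_zero]

theorem inl_apply (m : M) : (inl m : Smash M N) = mk m 0 := rfl

theorem inr_apply (n : N) : (inr n : Smash M N) = mk 0 n := rfl

theorem inl_infty : (inl infty : Smash M N) = infty :=
  mk_eq_mk_iff.2 (Or.inr ⟨Or.inl rfl, Or.inl rfl⟩)

theorem inr_infty : (inr infty : Smash M N) = infty :=
  mk_eq_mk_iff.2 (Or.inr ⟨Or.inr rfl, Or.inl rfl⟩)

theorem mk_eq_inl_add_inr (m : M) (n : N) : mk m n = inl m + inr n := by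
  rw [inl_apply, inr_apply, mk_add_mk, add_zero, zero_add]

end Smash

/-- The prime `𝔭 ∧ N ∪ M ∧ 𝔮` of `M ∧ N`. -/
def smashPrime (𝔭 : Set M) (𝔮 : Set N) : Set (Smash M N) :=
  {x | ∃ m n, x = Smash.mk m n ∧ (m ∈ 𝔭 ∨ n ∈ 𝔮)}

theorem mk_mem_smashPrime {𝔭 : Set M} {𝔮 : Set N} (h𝔭 : infty ∈ 𝔭) (h𝔮 : infty ∈ 𝔮)
    {m : M} {n : N} : Smash.mk m n ∈ smashPrime 𝔭 𝔮 ↔ m ∈ 𝔭 ∨ n ∈ 𝔮 := by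
  refine ⟨fun ⟨m', n', heq, h⟩ => ?_, fun h => ⟨m, n, rfl, h⟩⟩
  rcases Smash.mk_eq_mk_iff.1 heq with heq | ⟨hm | hn, -⟩
  · simp_all
  · exact Or.inl ((show m = infty from hm) ▸ h𝔭)
  · exact Or.inr ((show n = infty from hn) ▸ h𝔮)

theorem smashPrime_mono {𝔭 𝔭' : Set M} {𝔮 𝔮' : Set N} (h𝔭 : 𝔭 ⊆ 𝔭') (h𝔮 : 𝔮 ⊆ 𝔮') :
    smashPrime 𝔭 𝔮 ⊆ smashPrime 𝔭' 𝔮' := by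
  rintro _ ⟨m, n, rfl, h⟩
  exact ⟨m, n, rfl, h.imp (@h𝔭 m) (@h𝔮 n)⟩

theorem isPrime_smashPrime {𝔭 : Set M} {𝔮 : Set N} (h𝔭 : IsPrime 𝔭) (h𝔮 : IsPrime 𝔮) :
    IsPrime (smashPrime 𝔭 𝔮) := by
  have hmem : ∀ {m n}, Smash.mk m n ∈ smashPrime 𝔭 𝔮 ↔ m ∈ 𝔭 ∨ n ∈ 𝔮 :=
    mk_mem_smashPrime h𝔭.1.1 h𝔮.1.1
  refine ⟨⟨⟨infty, infty, rfl, Or.inl h𝔭.1.1⟩, ?_⟩, fun hu => ?_, ?_⟩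
  · rintro _ ⟨m, n, rfl, h⟩ x
    obtain ⟨m', n', rfl⟩ := Smash.exists_mk x
    exact ⟨m' + m, n' + n, rfl, h.imp (h𝔭.1.2 m · m') (h𝔮.1.2 n · n')⟩
  · rcases hmem.1 (hu ▸ Set.mem_univ (Smash.mk 0 0)) with h | h
    exacts [h𝔭.zero_notMem h, h𝔮.zero_notMem h]
  · rintro a b ha hb hab
    obtain ⟨m, n, rfl⟩ := Smash.exists_mk a
    obtain ⟨m', n', rfl⟩ := Smash.exists_mk b
    rw [hmem, not_or] at ha hb
    rw [Smash.mk_add_mk, hmem] at hab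
    exact hab.elim (h𝔭.2.2 m m' ha.1 hb.1) (h𝔮.2.2 n n' ha.2 hb.2)

theorem preimage_inl_smashPrime {𝔭 : Set M} {𝔮 : Set N} (h𝔭 : infty ∈ 𝔭) (h𝔮 : IsPrime 𝔮) :
    Smash.inl ⁻¹' smashPrime 𝔭 𝔮 = 𝔭 := by
  ext m
  rw [Set.mem_preimage, Smash.inl_apply, mk_mem_smashPrime h𝔭 h𝔮.1.1,
    or_iff_left h𝔮.zero_notMem]

theorem preimage_inr_smashPrime {𝔭 : Set M} {𝔮 : Set N} (h𝔭 : IsPrime 𝔭) (h𝔮 : infty ∈ 𝔮) :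
    Smash.inr ⁻¹' smashPrime 𝔭 𝔮 = 𝔮 := by
  ext n
  rw [Set.mem_preimage, Smash.inr_apply, mk_mem_smashPrime h𝔭.1.1 h𝔮,
    or_iff_right h𝔭.zero_notMem]

theorem smashPrime_preimage {𝔓 : Set (Smash M N)} (h : IsPrime 𝔓) :
    smashPrime (Smash.inl ⁻¹' 𝔓) (Smash.inr ⁻¹' 𝔓) = 𝔓 := by
  ext x
  obtain ⟨m, n, rfl⟩ := Smash.exists_mk x
  rw [mk_mem_smashPrime (h.preimage Smash.inl Smash.inl_infty).1.1
    (h.preimage Smash.inr Smash.inr_infty).1.1, Set.mem_preimage, Set.mem_preimage,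
    Smash.mk_eq_inl_add_inr, h.add_mem_iff]

def specSmashEquiv : Spec (Smash M N) ≃o Spec M × Spec N :=
  Equiv.toOrderIso
    { toFun 𝔓 := (⟨Smash.inl ⁻¹' 𝔓.1, 𝔓.2.preimage Smash.inl Smash.inl_infty⟩,
        ⟨Smash.inr ⁻¹' 𝔓.1, 𝔓.2.preimage Smash.inr Smash.inr_infty⟩)
      invFun 𝔭𝔮 := ⟨smashPrime 𝔭𝔮.1.1 𝔭𝔮.2.1, isPrime_smashPrime 𝔭𝔮.1.2 𝔭𝔮.2.2⟩
      left_inv 𝔓 := Subtype.ext (smashPrime_preimage 𝔓.2)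
      right_inv 𝔭𝔮 := Prod.ext (Subtype.ext (preimage_inl_smashPrime 𝔭𝔮.1.2.1.1 𝔭𝔮.2.2))
        (Subtype.ext (preimage_inr_smashPrime 𝔭𝔮.1.2 𝔭𝔮.2.2.1.1)) }
    (fun _ _ h => ⟨Set.preimage_mono h, Set.preimage_mono h⟩)
    (fun _ _ h => smashPrime_mono h.1 h.2)

end Binoid

open Binoid

/-- **Statement 8.** Let `M` and `N` be binoids with `M ≠ {∞}`, `N ≠ {∞}`, both of finite
combinatorial dimension. Then `dim (M∧N) = dim M + dim N`. -/
theorem dim_smash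
    {M N : Type*} [Binoid M] [Binoid N]
    (hM : (0 : M) ≠ Binoid.infty) (hN : (0 : N) ≠ Binoid.infty)
    (hdM : BddAbove (dimSet M)) (hdN : BddAbove (dimSet N)) :
    dim (Smash M N) = dim M + dim N := by
  have : Nonempty (Spec M) := ⟨⟨plusSet M, isPrime_plusSet hM⟩⟩
  have : Nonempty (Spec N) := ⟨⟨plusSet N, isPrime_plusSet hN⟩⟩
  rw [dimSet_eq_range_length] at hdM hdN
  simp only [dim, dimSet_eq_range_length, LTSeries.range_length_congr specSmashEquiv]
  exact LTSeries.sSup_range_length_prod hdM hdN
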